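/- Let B be a two-sided standard Brownian motion and let a > 0. There exist constants c > 0 and b > 0 such that for all y ≥ 1, P( sup_{0 ≤ z ≤ y} {B(z) + az} ≤ sup_{z ≤ 0} {B(z) + az} ) ≥ c·e^{−b·y}. -/

import Mathlib

/-!
Let `A` be the event that `B ≤ 1` on `[0, y]` and `D` the event that `B (-y) ≥ 2 a y + 1`. On
`A ∩ D` the supremum over `[0, y]` is at most `1 + a y ≤ B (-y) - a y`, one of the values over
`z ≤ 0`, and the supremum over `z ≤ 0` is a.s. finite: by Borel–Cantelli and Gaussian tails,
`B (-t)` reaches `a n / 2` on `[n, n + 1]` for only finitely many `n`. The events `A` and `D` depend on the two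
independent halves of `B`. The Gaussian density gives `P(D) ≥ c e^{-b y}`, and Lévy's maximal
inequality (the reflection principle on finitely many times, then on the countably many rational
times) gives `P(Aᶜ) ≤ 2 P(N(0, y) ≥ 1)`, hence `P(A) ≥ P(|N(0, y)| < 1) ≥ c e^{-3y/2}`.
-/

open MeasureTheory ProbabilityTheory Filter Set

noncomputable section

/-- The increment conditions of a standard Brownian motion on the nonnegative half-line:
increments over `[s,t]` (for `0 ≤ s ≤ t`) are centered Gaussian with variance `t - s`,
and increments over disjoint consecutive intervals are jointly independent. -/
def HasStdBMIncrements {Ω : Type*} [MeasureSpace Ω] (X : Ω → ℝ → ℝ) : Prop :=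
  (∀ s t : ℝ, 0 ≤ s → s ≤ t →
      Measure.map (fun ω => X ω t - X ω s) (ℙ : Measure Ω)
        = gaussianReal 0 (Real.toNNReal (t - s))) ∧
  (∀ (n : ℕ) (ts : Fin (n + 1) → ℝ), Monotone ts → 0 ≤ ts 0 →
      iIndepFun
        (fun (i : Fin n) ω => X ω (ts i.succ) - X ω (ts i.castSucc)) (ℙ : Measure Ω))

/-- A two-sided standard Brownian motion: a.s. continuous paths, starts at `0`,
the processes `t ↦ W t` and `t ↦ W (-t)` on `[0,∞)` are standard Brownian motions,
and these two halves are independent. -/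
def IsTwoSidedStdBM {Ω : Type*} [MeasureSpace Ω] (W : Ω → ℝ → ℝ) : Prop :=
  (∀ᵐ ω ∂(ℙ : Measure Ω), Continuous (W ω)) ∧
  (∀ᵐ ω ∂(ℙ : Measure Ω), W ω 0 = 0) ∧
  HasStdBMIncrements W ∧
  HasStdBMIncrements (fun ω t => W ω (-t)) ∧
  IndepFun (fun ω => (fun t : {t : ℝ // 0 ≤ t} => W ω t))
    (fun ω => (fun t : {t : ℝ // 0 ≤ t} => W ω (-(t : ℝ)))) (ℙ : Measure Ω)

open Real
open scoped NNReal ENNReal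

namespace ProbabilityTheory

variable {v : ℝ≥0}

lemma gaussianReal_Ici_zero (hv : v ≠ 0) : gaussianReal 0 v (Ici 0) = 2⁻¹ := by
  have hsymm : gaussianReal 0 v (Iic 0) = gaussianReal 0 v (Ici 0) := by
    conv_lhs => rw [← neg_zero, ← gaussianReal_map_neg,
      Measure.map_apply measurable_neg measurableSet_Iic]
    simp [Set.preimage, Set.Ici]
  have hcover :=
    measure_union_add_inter' (μ := gaussianReal 0 v) (measurableSet_Ici (a := 0)) (Iic 0)
  rw [Ici_union_Iic, Ici_inter_Iic, Icc_self, measure_univ,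
    gaussianReal_absolutelyContinuous 0 hv (by simp), add_zero, hsymm, ← two_mul] at hcover
  calc gaussianReal 0 v (Ici 0) = 2⁻¹ * (2 * gaussianReal 0 v (Ici 0)) :=
        (ENNReal.inv_mul_cancel_left two_ne_zero ENNReal.ofNat_ne_top).symm
    _ = 2⁻¹ := by rw [← hcover, mul_one]

lemma inv_two_le_gaussianReal_Ici_zero (v : ℝ≥0) : 2⁻¹ ≤ gaussianReal 0 v (Ici 0) := by
  rcases eq_or_ne v 0 with rfl | hv
  · simp [gaussianReal_zero_var]
  · exact (gaussianReal_Ici_zero hv).ge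

lemma gaussianReal_Ico_zero_add_Ici (hv : v ≠ 0) {r : ℝ} (hr : 0 ≤ r) :
    gaussianReal 0 v (Ico 0 r) + gaussianReal 0 v (Ici r) = 2⁻¹ := by
  rw [← measure_union ((Iio_disjoint_Ici le_rfl).mono_left Ico_subset_Iio_self)
    measurableSet_Ici, Ico_union_Ici_eq_Ici hr, gaussianReal_Ici_zero hv]

lemma ofReal_gaussianPDFReal_le_gaussianReal_Ico {r : ℝ} (hr : 0 ≤ r) :
    ENNReal.ofReal (gaussianPDFReal 0 v (r + 1)) ≤ gaussianReal 0 v (Ico r (r + 1)) := by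
  rcases eq_or_ne v 0 with rfl | hv
  · simp [gaussianPDFReal_zero_var]
  rw [gaussianReal_apply_eq_integral 0 hv]
  refine ENNReal.ofReal_le_ofReal ?_
  calc gaussianPDFReal 0 v (r + 1) = ∫ _ in Ico r (r + 1), gaussianPDFReal 0 v (r + 1) := by
        simp
    _ ≤ ∫ x in Ico r (r + 1), gaussianPDFReal 0 v x := by
        refine setIntegral_mono_on (by simp) (integrable_gaussianPDFReal 0 v).integrableOn
          measurableSet_Ico fun x hx => ?_
        simp only [gaussianPDFReal, sub_zero]
        gcongr <;> linarith [hx.1, hx.2]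

/-- Chernoff's bound, with the exponential moment of `N(0, v)` at `r / v`. -/
lemma gaussianReal_Ici_le_exp {r : ℝ} (hr : 0 ≤ r) :
    gaussianReal 0 v (Ici r) ≤ ENNReal.ofReal (exp (-r ^ 2 / (2 * v))) := by
  have hchernoff := measure_ge_le_exp_mul_mgf (μ := gaussianReal 0 v) (X := id) r
    (t := r / v) (by positivity) (integrable_exp_mul_gaussianReal _)
  rw [mgf_id_gaussianReal, ← exp_add] at hchernoff
  rw [← ofReal_measureReal]
  refine ENNReal.ofReal_le_ofReal (hchernoff.trans_eq (congrArg exp ?_))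
  rcases eq_or_ne (v : ℝ) 0 with hv | hv
  · simp [hv]
  · field_simp
    ring

lemma inv_sqrt_two_pi_mul_exp_le_gaussianPDFReal (hv : 1 ≤ (v : ℝ)) {x K : ℝ}
    (hx : |x| ≤ K * v) :
    (√(2 * π))⁻¹ * exp (-(1 + K ^ 2 / 2) * v) ≤ gaussianPDFReal 0 v x := by
  have hv0 : (0 : ℝ) < v := by linarith
  have hprefactor : (√(2 * π))⁻¹ * exp (-v) ≤ (√(2 * π * v))⁻¹ := by
    have hsqrt : √(v : ℝ) ≤ exp v :=
      ((sqrt_le_left hv0.le).2 (by nlinarith)).trans (by linarith [add_one_le_exp (v : ℝ)])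
    rw [sqrt_mul (by positivity : (0 : ℝ) ≤ 2 * π), mul_inv, exp_neg]
    gcongr
  have hexponent : -(K ^ 2 / 2) * v ≤ -(x - 0) ^ 2 / (2 * v) := by
    rw [le_div_iff₀ (by positivity), sub_zero, ← sq_abs x]
    nlinarith [abs_nonneg x, sq_nonneg (K * v - |x|)]
  calc (√(2 * π))⁻¹ * exp (-(1 + K ^ 2 / 2) * v)
      = (√(2 * π))⁻¹ * exp (-v) * exp (-(K ^ 2 / 2) * v) := by
        rw [mul_assoc, ← exp_add]; ring_nf
    _ ≤ gaussianPDFReal 0 v x := by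
        rw [gaussianPDFReal]
        gcongr

lemma ofReal_le_gaussianReal_Ico (hv : 1 ≤ (v : ℝ)) {r K : ℝ} (hr : 0 ≤ r)
    (hK : r + 1 ≤ K * v) :
    ENNReal.ofReal ((√(2 * π))⁻¹ * exp (-(1 + K ^ 2 / 2) * v)) ≤
      gaussianReal 0 v (Ico r (r + 1)) :=
  (ENNReal.ofReal_le_ofReal (inv_sqrt_two_pi_mul_exp_le_gaussianPDFReal hv
    (by rwa [abs_of_nonneg (by linarith)]))).trans (ofReal_gaussianPDFReal_le_gaussianReal_Ico hr)

end ProbabilityTheory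

section LevyInequality

variable {Ω : Type*} {S : ℕ → Ω → ℝ} {x : ℝ}

def firstHit (S : ℕ → Ω → ℝ) (x : ℝ) (j : ℕ) : Set Ω :=
  {ω | x ≤ S j ω ∧ ∀ k < j, S k ω < x}

lemma setOf_exists_le_subset_biUnion_firstHit (n : ℕ) :
    {ω | ∃ j ≤ n, x ≤ S j ω} ⊆ ⋃ j ∈ Finset.range (n + 1), firstHit S x j := by
  rintro ω ⟨j, hjn, hj⟩
  classical
  have hex : ∃ j, x ≤ S j ω := ⟨j, hj⟩
  refine mem_biUnion (Finset.mem_range_succ_iff.2 ((Nat.find_min' hex hj).trans hjn)) ?_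
  exact ⟨Nat.find_spec hex, fun k hk => not_le.1 (Nat.find_min hex hk)⟩

lemma disjoint_firstHit {j k : ℕ} (hjk : j < k) : Disjoint (firstHit S x j) (firstHit S x k) :=
  disjoint_left.2 fun _ hj hk => (hk.2 j hjk).not_ge hj.1

variable [MeasurableSpace Ω] {μ : Measure Ω}

lemma measure_firstHit_le_two_mul {n j : ℕ}
    (hindep : IndepFun (fun ω (i : Fin (j + 1)) => S i ω) (fun ω => S n ω - S j ω) μ)
    (hmedian : 2⁻¹ ≤ μ {ω | S j ω ≤ S n ω}) :
    μ (firstHit S x j) ≤ 2 * μ (firstHit S x j ∩ {ω | S j ω ≤ S n ω}) := by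
  have hA : firstHit S x j = (fun ω (i : Fin (j + 1)) => S i ω) ⁻¹'
      {v | x ≤ v (Fin.last j) ∧ ∀ k : Fin j, v k.castSucc < x} := by
    ext ω
    simp [firstHit, Fin.forall_iff]
  have hC : {ω | S j ω ≤ S n ω} = (fun ω => S n ω - S j ω) ⁻¹' Ici 0 := by
    ext ω
    simp
  have hE : MeasurableSet
      {v : Fin (j + 1) → ℝ | x ≤ v (Fin.last j) ∧ ∀ k : Fin j, v k.castSucc < x} := by
    simp only [ofPred_and, ofPred_forall]
    exact (measurableSet_le measurable_const (measurable_pi_apply _)).inter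
      (.iInter fun k => measurableSet_lt (measurable_pi_apply _) measurable_const)
  calc μ (firstHit S x j) = μ (firstHit S x j) * (2 * 2⁻¹) := by
        rw [ENNReal.mul_inv_cancel two_ne_zero ENNReal.ofNat_ne_top, mul_one]
    _ ≤ μ (firstHit S x j) * (2 * μ {ω | S j ω ≤ S n ω}) := by gcongr
    _ = 2 * μ (firstHit S x j ∩ {ω | S j ω ≤ S n ω}) := by
        rw [hA, hC, hindep.measure_inter_preimage_eq_mul _ _ hE measurableSet_Ici]
        ring

theorem levy_maximal_ineq {n : ℕ} (x : ℝ) (hS : ∀ j, AEMeasurable (S j) μ)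
    (hindep : ∀ j < n,
      IndepFun (fun ω (i : Fin (j + 1)) => S i ω) (fun ω => S n ω - S j ω) μ)
    (hmedian : ∀ j < n, 2⁻¹ ≤ μ {ω | S j ω ≤ S n ω}) :
    μ {ω | ∃ j ≤ n, x ≤ S j ω} ≤ 2 * μ {ω | x ≤ S n ω} := by
  set C : ℕ → Set Ω := fun j => {ω | S j ω ≤ S n ω}
  have hle : ∀ j ≤ n, μ (firstHit S x j) ≤ 2 * μ (firstHit S x j ∩ C j) := by
    intro j hjn
    rcases hjn.lt_or_eq with hjn | rfl
    · exact measure_firstHit_le_two_mul (hindep j hjn) (hmedian j hjn)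
    · simpa [C] using le_mul_of_one_le_left zero_le one_le_two
  have hmeas : ∀ j, NullMeasurableSet (firstHit S x j ∩ C j) μ := fun j => by
    simp only [firstHit, C, ofPred_and, ofPred_forall]
    exact ((nullMeasurableSet_le aemeasurable_const (hS j)).inter
      (.iInter fun k => .iInter fun _ => nullMeasurableSet_lt (hS k) aemeasurable_const)).inter
      (nullMeasurableSet_le (hS j) (hS n))
  have hdisj : Set.Pairwise ↑(Finset.range (n + 1))
      (Function.onFun (AEDisjoint μ) fun j => firstHit S x j ∩ C j) := by
    intro j _ k _ hjk
    rcases hjk.lt_or_gt with hlt | hlt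
    exacts [((disjoint_firstHit hlt).mono inter_subset_left inter_subset_left).aedisjoint,
      ((disjoint_firstHit hlt).mono inter_subset_left inter_subset_left).symm.aedisjoint]
  have hsub : ⋃ j ∈ Finset.range (n + 1), firstHit S x j ∩ C j ⊆ {ω | x ≤ S n ω} := by
    simp only [iUnion_subset_iff]
    exact fun j _ ω hω => hω.1.1.trans hω.2
  calc μ {ω | ∃ j ≤ n, x ≤ S j ω} ≤ ∑ j ∈ Finset.range (n + 1), μ (firstHit S x j) :=
        (measure_mono (setOf_exists_le_subset_biUnion_firstHit n)).trans
          (measure_biUnion_finset_le _ _)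
    _ ≤ ∑ j ∈ Finset.range (n + 1), 2 * μ (firstHit S x j ∩ C j) :=
        Finset.sum_le_sum fun j hj => hle j (Finset.mem_range_succ_iff.1 hj)
    _ = 2 * μ (⋃ j ∈ Finset.range (n + 1), firstHit S x j ∩ C j) := by
        rw [← Finset.mul_sum, measure_biUnion_finset₀ hdisj fun j _ => hmeas j]
    _ ≤ 2 * μ {ω | x ≤ S n ω} := by gcongr

end LevyInequality

lemma Fin.partialSum_succ_sub_castSucc {n : ℕ} (f : Fin (n + 1) → ℝ) (i : Fin (n + 1)) :
    Fin.partialSum (fun k : Fin n => f k.succ - f k.castSucc) i = f i - f 0 := by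
  induction i using Fin.induction with
  | zero => simp
  | succ i ih => rw [Fin.partialSum_succ, ih]; ring

lemma measurable_partialSum {n : ℕ} :
    Measurable (Fin.partialSum : (Fin n → ℝ) → Fin (n + 1) → ℝ) := by
  refine measurable_pi_lambda _ fun i => ?_
  induction i using Fin.induction with
  | zero => simp
  | succ i ih =>
    simp only [Fin.partialSum_succ]
    fun_prop

lemma ProbabilityTheory.iIndepFun.indepFun_init_last {Ω β : Type*} [MeasurableSpace Ω]
    [MeasurableSpace β] {μ : Measure Ω} {n : ℕ} {f : Fin (n + 1) → Ω → β} (h : iIndepFun f μ)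
    (hf : ∀ i, AEMeasurable (f i) μ) :
    IndepFun (fun ω (i : Fin n) => f i.castSucc ω) (f (Fin.last n)) μ := by
  have hsplit := h.indepFun_finset₀ (Finset.univ.map Fin.castSuccEmb) {Fin.last n}
    (Finset.disjoint_singleton_right.2 (by simp)) hf
  exact hsplit.comp
    (measurable_pi_lambda _ fun (i : Fin n) => measurable_pi_apply ⟨i.castSucc, by simp⟩)
    (measurable_pi_apply ⟨Fin.last n, Finset.mem_singleton_self _⟩)

lemma Finset.exists_monotone_enum {α : Type*} [LinearOrder α] (F : Finset α) (hF : F.Nonempty) :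
    ∃ (t : ℕ → α) (n : ℕ), Monotone t ∧ t 0 = F.min' hF ∧ t n = F.max' hF ∧
      ∀ a ∈ F, ∃ j ≤ n, t j = a := by
  set n := F.card - 1
  have hcard : 0 < F.card := F.card_pos.2 hF
  set e := F.orderEmbOfFin rfl
  refine ⟨fun j => e ⟨min j n, by omega⟩, n, fun i j hij => e.monotone ?_, ?_, ?_,
    fun a ha => ?_⟩
  · exact Fin.mk_le_mk.2 (min_le_min_right n hij)
  · simpa using F.orderEmbOfFin_zero rfl hcard
  · simpa using F.orderEmbOfFin_last rfl hcard
  · obtain ⟨i, rfl⟩ : a ∈ Set.range e := by rwa [Finset.range_orderEmbOfFin]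
    exact ⟨i, by omega, by simp [show min (i : ℕ) n = i by omega]⟩

lemma Continuous.le_of_forall_ratCast_mem_Icc {f : ℝ → ℝ} (hf : Continuous f) {a b c : ℝ}
    (hab : a < b) (h : ∀ q : ℚ, (q : ℝ) ∈ Icc a b → f q ≤ c) {z : ℝ} (hz : z ∈ Icc a b) :
    f z ≤ c := by
  have hrat : Ioo a b ∩ range ((↑) : ℚ → ℝ) ⊆ {z | f z ≤ c} := by
    rintro _ ⟨hq, q, rfl⟩
    exact h q (Ioo_subset_Icc_self hq)
  rw [← closure_Ioo hab.ne] at hz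
  exact (isClosed_le hf continuous_const).closure_subset_iff.2 hrat
    (closure_minimal (Rat.denseRange_cast.open_subset_closure_inter isOpen_Ioo) isClosed_closure hz)

lemma Continuous.bddAbove_image_sub_mul_Ici {f : ℝ → ℝ} (hf : Continuous f) {a : ℝ}
    (ha : 0 ≤ a) {N : ℕ}
    (h : ∀ n ≥ N, ∀ q : ℚ, (q : ℝ) ∈ Icc (n : ℝ) (n + 1) → f q - f 0 ≤ a * n / 2) :
    BddAbove ((fun t => f t - a * t) '' Ici 0) := by
  have htail : ∀ z ∈ Ici (N : ℝ), f z - a * z ≤ f 0 := by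
    intro z hz
    set n := ⌊z⌋₊
    have hnz : (n : ℝ) ≤ z := Nat.floor_le (N.cast_nonneg.trans hz)
    have hbelow : f z - f 0 ≤ a * n / 2 :=
      (hf.sub continuous_const).le_of_forall_ratCast_mem_Icc (f := fun z => f z - f 0)
        (by linarith) (h n (Nat.le_floor hz)) ⟨hnz, (Nat.lt_floor_add_one z).le⟩
    nlinarith [n.cast_nonneg (α := ℝ)]
  rw [← Icc_union_Ici_eq_Ici N.cast_nonneg, image_union]
  refine ((isCompact_Icc.image (by fun_prop)).bddAbove).union ⟨f 0, ?_⟩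
  rintro _ ⟨z, hz, rfl⟩
  exact htail z hz

lemma sSup_image_Icc_le_sSup_image_Iic {f : ℝ → ℝ} (hf : Continuous f) {a y c : ℝ}
    (ha : 0 ≤ a) (hy : 0 < y) (hbdd : BddAbove ((fun z => f z + a * z) '' Iic 0))
    (hle : ∀ q : ℚ, (q : ℝ) ∈ Icc 0 y → f q ≤ c) (hge : c + 2 * a * y ≤ f (-y)) :
    sSup ((fun z => f z + a * z) '' Icc 0 y) ≤ sSup ((fun z => f z + a * z) '' Iic 0) := by
  refine csSup_le ((nonempty_Icc.2 hy.le).image _) ?_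
  rintro _ ⟨z, hz, rfl⟩
  have hsup := le_csSup hbdd (mem_image_of_mem _ (show -y ∈ Iic 0 from neg_nonpos.2 hy.le))
  nlinarith [hf.le_of_forall_ratCast_mem_Icc hy hle hz, mul_le_mul_of_nonneg_left hz.2 ha]

namespace HasStdBMIncrements

variable {Ω : Type*} [MeasureSpace Ω] {X : Ω → ℝ → ℝ}

lemma aemeasurable_sub (hX : HasStdBMIncrements X) {s t : ℝ} (hs : 0 ≤ s) (hst : s ≤ t) :
    AEMeasurable (fun ω => X ω t - X ω s) ℙ :=
  aemeasurable_of_map_neZero (by rw [hX.1 s t hs hst]; infer_instance)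

lemma measure_sub_mem (hX : HasStdBMIncrements X) {s t : ℝ} (hs : 0 ≤ s) (hst : s ≤ t)
    {E : Set ℝ} (hE : MeasurableSet E) :
    ℙ {ω | X ω t - X ω s ∈ E} = gaussianReal 0 (t - s).toNNReal E := by
  rw [← hX.1 s t hs hst, Measure.map_apply_of_aemeasurable (hX.aemeasurable_sub hs hst) hE]
  rfl

lemma indepFun_sub_sub (hX : HasStdBMIncrements X) {t : ℕ → ℝ} (ht : Monotone t)
    (ht0 : 0 ≤ t 0) {j n : ℕ} (hjn : j ≤ n) :
    IndepFun (fun ω (i : Fin (j + 1)) => X ω (t i) - X ω (t 0))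
      (fun ω => X ω (t n) - X ω (t j)) ℙ := by
  -- `u` lists the times `t 0 ≤ ⋯ ≤ t j ≤ t n`; the positions `X (t i) - X (t 0)`, `i ≤ j`,
  -- are the partial sums of its first `j` increments
  set u : Fin (j + 2) → ℝ := fun k => t (if (k : ℕ) ≤ j then k else n)
  have hu : Monotone u := fun k k' hkk' => ht (by
    have : (k : ℕ) ≤ k' := hkk'
    split_ifs <;> omega)
  have hu0 : 0 ≤ u 0 := by simpa [u] using ht0
  have hincr := (hX.2 (j + 1) u hu hu0).indepFun_init_last fun i =>
    hX.aemeasurable_sub (hu0.trans (hu (Fin.zero_le _))) (hu (Fin.castSucc_le_succ i))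
  convert hincr.comp measurable_partialSum measurable_id using 1
  · ext ω i
    simp only [Function.comp_apply, Fin.succ_castSucc]
    rw [Fin.partialSum_succ_sub_castSucc (fun k => X ω (u k.castSucc))]
    simp [u, Fin.is_le]
  · ext ω
    simp [u]

lemma measure_exists_le_sub_le (hX : HasStdBMIncrements X) {t : ℕ → ℝ} (ht : Monotone t)
    (ht0 : 0 ≤ t 0) (n : ℕ) (x : ℝ) :
    ℙ {ω | ∃ j ≤ n, x ≤ X ω (t j) - X ω (t 0)} ≤
      2 * gaussianReal 0 (t n - t 0).toNNReal (Ici x) := by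
  have hle : ∀ {i j}, i ≤ j → 0 ≤ t i ∧ t i ≤ t j := fun hij =>
    ⟨ht0.trans (ht (Nat.zero_le _)), ht hij⟩
  refine (levy_maximal_ineq x (fun j => hX.aemeasurable_sub ht0 (hle (Nat.zero_le j)).2)
    (fun j hj => ?_) (fun j hj => ?_)).trans_eq ?_
  · simpa only [sub_sub_sub_cancel_right] using hX.indepFun_sub_sub ht ht0 hj.le
  · convert inv_two_le_gaussianReal_Ici_zero (t n - t j).toNNReal using 1
    rw [← hX.measure_sub_mem (hle hj.le).1 (hle hj.le).2 measurableSet_Ici]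
    congr 1 with ω
    simp
  · rw [← hX.measure_sub_mem ht0 (hle (Nat.zero_le n)).2 measurableSet_Ici]
    rfl

lemma measure_exists_mem_finset_le_sub_le (hX : HasStdBMIncrements X) {s T : ℝ} (hs : 0 ≤ s)
    (hsT : s ≤ T) {F : Finset ℝ} (hF : ↑F ⊆ Icc s T) (x : ℝ) :
    ℙ {ω | ∃ q ∈ F, x ≤ X ω q - X ω s} ≤ 2 * gaussianReal 0 (T - s).toNNReal (Ici x) := by
  set G := insert s (insert T F)
  have hG : ∀ r ∈ G, r ∈ Icc s T := by
    simp only [G, Finset.mem_insert]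
    rintro r (rfl | rfl | hr)
    exacts [⟨le_rfl, hsT⟩, ⟨hsT, le_rfl⟩, hF hr]
  obtain ⟨t, n, ht, ht0, htn, hcover⟩ := G.exists_monotone_enum (Finset.insert_nonempty _ _)
  have ht0 : t 0 = s := ht0.trans (le_antisymm (G.min'_le s (by simp [G]))
    (G.le_min' _ s fun r hr => (hG r hr).1))
  have htn : t n = T := htn.trans (le_antisymm (G.max'_le _ T fun r hr => (hG r hr).2)
    (G.le_max' T (by simp [G])))
  calc ℙ {ω | ∃ q ∈ F, x ≤ X ω q - X ω s}
      ≤ ℙ {ω | ∃ j ≤ n, x ≤ X ω (t j) - X ω (t 0)} := by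
        refine measure_mono fun ω ⟨q, hq, hxq⟩ => ?_
        obtain ⟨j, hjn, rfl⟩ := hcover q (by simp [G, hq])
        exact ⟨j, hjn, ht0 ▸ hxq⟩
    _ ≤ 2 * gaussianReal 0 (T - s).toNNReal (Ici x) := by
        simpa only [ht0, htn] using hX.measure_exists_le_sub_le ht (ht0 ▸ hs) n x

lemma measure_exists_mem_le_sub_le (hX : HasStdBMIncrements X) {s T : ℝ} (hs : 0 ≤ s)
    (hsT : s ≤ T) {Q : Set ℝ} (hQ : Q.Countable) (hQsub : Q ⊆ Icc s T) (x : ℝ) :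
    ℙ {ω | ∃ q ∈ Q, x ≤ X ω q - X ω s} ≤ 2 * gaussianReal 0 (T - s).toNNReal (Ici x) := by
  rcases Q.eq_empty_or_nonempty with rfl | hQne
  · simp
  obtain ⟨e, rfl⟩ := hQ.exists_eq_range hQne
  have hunion : {ω | ∃ q ∈ range e, x ≤ X ω q - X ω s} =
      ⋃ N, {ω | ∃ q ∈ (Finset.range N).image e, x ≤ X ω q - X ω s} := by
    ext ω
    simp only [mem_range, mem_ofPred_eq, mem_iUnion, Finset.mem_image, Finset.mem_range]
    constructor
    · rintro ⟨_, ⟨i, rfl⟩, hi⟩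
      exact ⟨i + 1, e i, ⟨i, i.lt_succ_self, rfl⟩, hi⟩
    · rintro ⟨_, _, ⟨i, _, rfl⟩, hi⟩
      exact ⟨e i, ⟨i, rfl⟩, hi⟩
  have hmono : Monotone fun N => {ω | ∃ q ∈ (Finset.range N).image e, x ≤ X ω q - X ω s} :=
    fun N N' hNN' ω ⟨q, hq, hxq⟩ =>
      ⟨q, Finset.image_subset_image (Finset.range_subset_range.2 hNN') hq, hxq⟩
  rw [hunion, hmono.measure_iUnion]
  refine iSup_le fun N => hX.measure_exists_mem_finset_le_sub_le hs hsT ?_ x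
  intro q hq
  obtain ⟨i, -, rfl⟩ := Finset.mem_image.1 hq
  exact hQsub (mem_range_self i)

lemma ae_bddAbove_sub_mul (hX : HasStdBMIncrements X)
    (hcont : ∀ᵐ ω, Continuous (X ω)) {a : ℝ} (ha : 0 < a) :
    ∀ᵐ ω, BddAbove ((fun t => X ω t - a * t) '' Ici 0) := by
  set ρ := exp (-(a ^ 2 / 16))
  set E : ℕ → Set Ω := fun n =>
    {ω | ∃ q ∈ range ((↑) : ℚ → ℝ) ∩ Icc (n : ℝ) (n + 1), a * n / 2 ≤ X ω q - X ω 0}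
  have hE : ∀ n : ℕ, ℙ (E n) ≤ ENNReal.ofReal (2 * ρ ^ n) := by
    intro n
    have hn : (0 : ℝ) ≤ n := n.cast_nonneg
    refine (hX.measure_exists_mem_le_sub_le le_rfl (by positivity)
      ((countable_range _).mono inter_subset_left)
      (inter_subset_right.trans (Icc_subset_Icc_left hn)) _).trans ?_
    rw [sub_zero, ENNReal.ofReal_mul zero_le_two, ENNReal.ofReal_ofNat]
    refine mul_le_mul_right ((gaussianReal_Ici_le_exp (by positivity)).trans
      (ENNReal.ofReal_le_ofReal ?_)) 2
    rw [← exp_nat_mul, Real.coe_toNNReal _ (by positivity), exp_le_exp,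
      div_le_iff₀ (by positivity)]
    have hn2 : (n : ℝ) ≤ n ^ 2 := by exact_mod_cast Nat.le_self_pow two_ne_zero n
    nlinarith [mul_le_mul_of_nonneg_left hn2 (sq_nonneg a)]
  have hsum : ∑' n, ℙ (E n) ≠ ∞ := by
    have hρ : ρ < 1 := exp_lt_one_iff.2 (by have := pow_pos ha 2; linarith)
    have hsummable : Summable fun n : ℕ => 2 * ρ ^ n :=
      (summable_geometric_of_lt_one (exp_nonneg _) hρ).mul_left 2
    refine ne_top_of_le_ne_top ?_ (ENNReal.tsum_le_tsum hE)
    rw [← ENNReal.ofReal_tsum_of_nonneg (fun n => by positivity) hsummable]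
    exact ENNReal.ofReal_ne_top
  filter_upwards [hcont, ae_eventually_notMem hsum] with ω hω hE_eventually
  obtain ⟨N, hN⟩ := eventually_atTop.1 hE_eventually
  exact hω.bddAbove_image_sub_mul_Ici ha.le fun n hn q hq =>
    (not_le.1 fun hle => hN n hn ⟨q, ⟨mem_range_self q, hq⟩, hle⟩).le

lemma ofReal_le_measure_forall_ratCast_sub_le_one [IsProbabilityMeasure (ℙ : Measure Ω)]
    (hX : HasStdBMIncrements X) {y : ℝ} (hy : 1 ≤ y) :
    ENNReal.ofReal ((√(2 * π))⁻¹ * exp (-(3 / 2) * y)) ≤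
      ℙ {ω | ∀ q : ℚ, (q : ℝ) ∈ Icc 0 y → X ω q - X ω 0 ≤ 1} := by
  set A := {ω | ∀ q : ℚ, (q : ℝ) ∈ Icc 0 y → X ω q - X ω 0 ≤ 1}
  have hy0 : 0 ≤ y := zero_le_one.trans hy
  set v := (y - 0).toNNReal
  have hv : (v : ℝ) = y := by simp [v, hy0]
  have hAc : ℙ Aᶜ ≤ 2 * gaussianReal 0 v (Ici 1) := by
    refine (measure_mono fun ω hω => ?_).trans (hX.measure_exists_mem_le_sub_le le_rfl hy0
      ((countable_range ((↑) : ℚ → ℝ)).mono inter_subset_left) inter_subset_right 1)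
    simp only [A, mem_compl_iff, mem_ofPred_eq, not_forall, not_le] at hω
    obtain ⟨q, hq, hlt⟩ := hω
    exact ⟨q, ⟨mem_range_self q, hq⟩, hlt.le⟩
  -- by symmetry, `1 - 2 P(N ≥ 1) = 2 P(0 ≤ N < 1)` for `N ~ N(0, v)`
  have hhalf : 2 * gaussianReal 0 v (Ico 0 1) + 2 * gaussianReal 0 v (Ici 1) = 1 := by
    rw [← mul_add, gaussianReal_Ico_zero_add_Ici (by simp [v]; linarith) zero_le_one,
      ENNReal.mul_inv_cancel two_ne_zero ENNReal.ofNat_ne_top]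
  have hIco : 2 * gaussianReal 0 v (Ico 0 1) ≤ ℙ A := by
    refine ENNReal.le_of_add_le_add_right (by finiteness) (hhalf.trans_le ?_)
    calc 1 = ℙ (univ : Set Ω) := measure_univ.symm
      _ ≤ ℙ A + ℙ Aᶜ := measure_univ_le_add_compl A
      _ ≤ ℙ A + 2 * gaussianReal 0 v (Ici 1) := by gcongr
  calc ENNReal.ofReal ((√(2 * π))⁻¹ * exp (-(3 / 2) * y))
      = ENNReal.ofReal ((√(2 * π))⁻¹ * exp (-(1 + 1 ^ 2 / 2) * v)) := by norm_num [hv]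
    _ ≤ gaussianReal 0 v (Ico 0 (0 + 1)) :=
        ofReal_le_gaussianReal_Ico (hv ▸ hy) le_rfl (by rw [hv]; linarith)
    _ ≤ 2 * gaussianReal 0 v (Ico 0 1) := by
        rw [zero_add]
        exact le_mul_of_one_le_left zero_le one_le_two
    _ ≤ ℙ A := hIco

lemma ofReal_le_measure_le_sub (hX : HasStdBMIncrements X) {y r K : ℝ} (hy : 1 ≤ y)
    (hr : 0 ≤ r) (hK : r + 1 ≤ K * y) :
    ENNReal.ofReal ((√(2 * π))⁻¹ * exp (-(1 + K ^ 2 / 2) * y)) ≤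
      ℙ {ω | r ≤ X ω y - X ω 0} := by
  have hy0 : 0 ≤ y := zero_le_one.trans hy
  have hv : ((y - 0).toNNReal : ℝ) = y := by simp [hy0]
  calc ENNReal.ofReal ((√(2 * π))⁻¹ * exp (-(1 + K ^ 2 / 2) * y))
      ≤ gaussianReal 0 (y - 0).toNNReal (Ico r (r + 1)) := by
        have h := ofReal_le_gaussianReal_Ico (hv ▸ hy) hr (hv ▸ hK)
        rwa [hv] at h
    _ ≤ gaussianReal 0 (y - 0).toNNReal (Ici r) := measure_mono Ico_subset_Ici_self
    _ = ℙ {ω | r ≤ X ω y - X ω 0} := (hX.measure_sub_mem le_rfl hy0 measurableSet_Ici).symm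

end HasStdBMIncrements

lemma IsTwoSidedStdBM.ae_bddAbove_image_Iic {Ω : Type*} [MeasureSpace Ω] {B : Ω → ℝ → ℝ}
    (hB : IsTwoSidedStdBM B) {a : ℝ} (ha : 0 < a) :
    ∀ᵐ ω, BddAbove ((fun z => B ω z + a * z) '' Iic 0) := by
  filter_upwards [hB.2.2.2.1.ae_bddAbove_sub_mul
    (hB.1.mono fun ω h => h.comp continuous_neg) ha] with ω ⟨M, hM⟩
  refine ⟨M, ?_⟩
  rintro _ ⟨z, hz, rfl⟩
  simpa using hM ⟨-z, mem_Ici.2 (neg_nonneg.2 hz), rfl⟩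

/-- for a two-sided standard Brownian motion `B` and `a > 0`, there are
constants `c, b > 0` such that for all `y ≥ 1`,
`P(sup_{0 ≤ z ≤ y} (B(z) + a z) ≤ sup_{z ≤ 0} (B(z) + a z)) ≥ c e^{-b y}`. -/
theorem sup_comparison_lower_bound {Ω : Type*} [MeasureSpace Ω]
    [IsProbabilityMeasure (ℙ : Measure Ω)]
    (B : Ω → ℝ → ℝ) (hB : IsTwoSidedStdBM B) (a : ℝ) (ha : 0 < a) :
    ∃ c > (0 : ℝ), ∃ b > (0 : ℝ), ∀ y : ℝ, 1 ≤ y →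
      ENNReal.ofReal (c * Real.exp (-b * y)) ≤
        ℙ {ω | sSup ((fun z => B ω z + a * z) '' Set.Icc 0 y)
                ≤ sSup ((fun z => B ω z + a * z) '' Set.Iic 0)} := by
  have hbdd := hB.ae_bddAbove_image_Iic ha
  obtain ⟨hcont, hzero, hpos, hneg, hhalves⟩ := hB
  set κ := (√(2 * π))⁻¹
  set K := 2 * a + 2
  refine ⟨κ ^ 2, by positivity, 3 / 2 + (1 + K ^ 2 / 2), by positivity, fun y hy => ?_⟩
  have hy0 : 0 ≤ y := zero_le_one.trans hy
  set A := {ω | ∀ q : ℚ, (q : ℝ) ∈ Icc 0 y → B ω q - B ω 0 ≤ 1}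
  set D := {ω | 2 * a * y + 1 ≤ B ω (-y) - B ω (-0)}
  have hAD : ℙ (A ∩ D) = ℙ A * ℙ D := by
    refine hhalves.measure_inter_preimage_eq_mul
      {f | ∀ q : ℚ, ∀ hq : (q : ℝ) ∈ Icc 0 y, f ⟨q, hq.1⟩ - f ⟨0, le_rfl⟩ ≤ 1}
      {f | 2 * a * y + 1 ≤ f ⟨y, hy0⟩ - f ⟨0, le_rfl⟩} ?_ ?_
    · simp only [ofPred_forall]
      exact .iInter fun q => .iInter fun hq => measurableSet_le (by fun_prop) measurable_const
    · exact measurableSet_le measurable_const (by fun_prop)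
  have hAD_sub : (A ∩ D : Set Ω) ≤ᵐ[ℙ] {ω | sSup ((fun z => B ω z + a * z) '' Set.Icc 0 y)
      ≤ sSup ((fun z => B ω z + a * z) '' Set.Iic 0)} := by
    filter_upwards [hcont, hzero, hbdd] with ω hω hω0 hωbdd ⟨hωA, hωD⟩
    simp only [D, mem_ofPred_eq, neg_zero, hω0, sub_zero] at hωD
    exact sSup_image_Icc_le_sSup_image_Iic hω ha.le (by linarith) hωbdd (c := 1)
      (fun q hq => by simpa [hω0] using hωA q hq) (by linarith)
  calc ENNReal.ofReal (κ ^ 2 * exp (-(3 / 2 + (1 + K ^ 2 / 2)) * y))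
      = ENNReal.ofReal (κ * exp (-(3 / 2) * y)) *
          ENNReal.ofReal (κ * exp (-(1 + K ^ 2 / 2) * y)) := by
        rw [← ENNReal.ofReal_mul (by positivity), neg_add, add_mul, exp_add]
        ring_nf
    _ ≤ ℙ A * ℙ D := mul_le_mul' (hpos.ofReal_le_measure_forall_ratCast_sub_le_one hy)
        (hneg.ofReal_le_measure_le_sub hy (by positivity) (by nlinarith))
    _ = ℙ (A ∩ D) := hAD.symm
    _ ≤ _ := measure_mono_ae hAD_sub
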